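/- If f ∈ L¹(ℝ²) is continuous with F₂f integrable, then whenever F₁(Rf(α,·)) ≡ 0 for all α ∈ [0,π), f ≡ 0. -/

import Mathlib

open Real MeasureTheory Complex

noncomputable def radonC (f : ℝ × ℝ → ℂ) (α t : ℝ) : ℂ :=
  ∫ z : ℝ, f (z * Real.cos α - t * Real.sin α, z * Real.sin α + t * Real.cos α)

noncomputable def fourier2D (f : ℝ × ℝ → ℂ) (ξ₁ ξ₂ : ℝ) : ℂ :=
  ∫ p : ℝ × ℝ, f p * Complex.exp (-2 * Real.pi * Complex.I * (p.1 * ξ₁ + p.2 * ξ₂))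

open scoped FourierTransform RealInnerProductSpace

/-- Every point of the plane can be written as `(-r sin α, r cos α)` with `α ∈ [0, π)`. -/
lemma polar_cover (ξ₁ ξ₂ : ℝ) :
    ∃ α r : ℝ, α ∈ Set.Ico (0:ℝ) Real.pi ∧ ξ₁ = -r * Real.sin α ∧ ξ₂ = r * Real.cos α := by
  set z : ℂ := ⟨ξ₂, -ξ₁⟩ with hz
  have hre : ‖z‖ * Real.cos z.arg = ξ₂ := Complex.norm_mul_cos_arg z
  have him : ‖z‖ * Real.sin z.arg = -ξ₁ := Complex.norm_mul_sin_arg z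
  rcases lt_or_ge z.arg 0 with h | h
  · refine ⟨z.arg + Real.pi, -‖z‖,
      ⟨by linarith [Complex.neg_pi_lt_arg z], by linarith [Real.pi_pos]⟩, ?_, ?_⟩
    · rw [Real.sin_add_pi]; nlinarith
    · rw [Real.cos_add_pi]; nlinarith
  · rcases lt_or_eq_of_le (Complex.arg_le_pi z) with h' | h'
    · exact ⟨z.arg, ‖z‖, ⟨h, h'⟩, by nlinarith, by nlinarith⟩
    · refine ⟨0, -‖z‖, ⟨le_refl _, Real.pi_pos⟩, ?_, ?_⟩
      · simp only [Real.sin_zero]; rw [h'] at him; simp [Real.sin_pi] at him; linarith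
      · simp only [Real.cos_zero]; rw [h'] at hre; simp [Real.cos_pi] at hre; linarith

/-- Rotation by `α` (composed with a swap of the coordinates) as a measurable equivalence
of the plane. -/
noncomputable def rotEquiv (α : ℝ) : (ℝ × ℝ) ≃ᵐ (ℝ × ℝ) :=
  ((MeasurableEquiv.prodComm : ℝ × ℝ ≃ᵐ ℝ × ℝ)).trans <|
    (Complex.measurableEquivRealProd.symm).trans <|
      ((rotation (Circle.exp α)).toHomeomorph.toMeasurableEquiv).trans
        Complex.measurableEquivRealProd

lemma rotEquiv_apply (α : ℝ) (q : ℝ × ℝ) :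
    rotEquiv α q = (q.2 * Real.cos α - q.1 * Real.sin α, q.2 * Real.sin α + q.1 * Real.cos α) := by
  simp only [rotEquiv, MeasurableEquiv.trans_apply, MeasurableEquiv.prodComm,
    Homeomorph.toMeasurableEquiv_coe, LinearIsometryEquiv.coe_toHomeomorph,
    Complex.measurableEquivRealProd_apply, Complex.measurableEquivRealProd_symm_apply,
    rotation_apply, Circle.coe_exp, Prod.swap]
  rw [Complex.exp_mul_I]
  simp [Complex.ext_iff, Complex.mul_re, Complex.mul_im, Complex.cos_ofReal_re,
    Complex.sin_ofReal_re, Complex.add_re, Complex.add_im]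
  constructor <;> ring

lemma rotEquiv_mp (α : ℝ) : MeasurePreserving (rotEquiv α) volume volume := by
  have h1 : MeasurePreserving ((MeasurableEquiv.prodComm : ℝ × ℝ ≃ᵐ ℝ × ℝ))
      (volume : Measure (ℝ × ℝ)) volume := by
    rw [Measure.volume_eq_prod]
    exact Measure.measurePreserving_swap
  have h2 := Complex.volume_preserving_equiv_real_prod.symm Complex.measurableEquivRealProd
  have h3 : MeasurePreserving ((rotation (Circle.exp α)).toHomeomorph.toMeasurableEquiv)
      volume volume := (rotation (Circle.exp α)).measurePreserving
  have h4 := Complex.volume_preserving_equiv_real_prod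
  exact ((h4.comp h3).comp h2).comp h1

/-- Fourier slice theorem: the 1D Fourier transform of the Radon projection at angle `α`
is the 2D Fourier transform evaluated on the corresponding line. -/
lemma fourier_slice (f : ℝ × ℝ → ℂ) (hf : Integrable f) (α r : ℝ) :
    fourier2D f (-r * Real.sin α) (r * Real.cos α)
      = ∫ t : ℝ, radonC f α t * Complex.exp (-2 * Real.pi * Complex.I * r * t) := by
  set ξ₁ : ℝ := -r * Real.sin α with hξ₁
  set ξ₂ : ℝ := r * Real.cos α with hξ₂
  set G : ℝ × ℝ → ℂ :=
    fun p => f p * Complex.exp (-2 * Real.pi * Complex.I * (p.1 * ξ₁ + p.2 * ξ₂)) with hG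
  have hGint : Integrable G := by
    have hb : ∀ p : ℝ × ℝ,
        ‖Complex.exp (-2 * Real.pi * Complex.I * (p.1 * ξ₁ + p.2 * ξ₂))‖ ≤ 1 := by
      intro p
      have : (-2 * (Real.pi : ℂ) * Complex.I * (p.1 * ξ₁ + p.2 * ξ₂))
          = ((-2 * Real.pi * (p.1 * ξ₁ + p.2 * ξ₂) : ℝ) : ℂ) * Complex.I := by
        push_cast; ring
      rw [this]
      exact (Complex.norm_exp_ofReal_mul_I _).le
    have hm : AEStronglyMeasurable
        (fun p : ℝ × ℝ => Complex.exp (-2 * Real.pi * Complex.I * (p.1 * ξ₁ + p.2 * ξ₂)))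
        volume := by
      apply Continuous.aestronglyMeasurable
      fun_prop
    simpa [hG, mul_comm] using hf.bdd_mul hm (Filter.Eventually.of_forall hb)
  have hexp : ∀ q : ℝ × ℝ, G (rotEquiv α q)
      = f (rotEquiv α q) * Complex.exp (-2 * Real.pi * Complex.I * r * q.1) := by
    intro q
    simp only [hG]
    congr 1
    have hr : ((rotEquiv α q).1 * ξ₁ + (rotEquiv α q).2 * ξ₂ : ℝ) = r * q.1 := by
      rw [rotEquiv_apply]
      simp only [hξ₁, hξ₂]
      linear_combination (q.1 * r) * Real.sin_sq_add_cos_sq α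
    have : (((rotEquiv α q).1 : ℂ) * ξ₁ + ((rotEquiv α q).2 : ℂ) * ξ₂) = (r : ℂ) * q.1 := by
      exact_mod_cast congrArg (fun x : ℝ => (x : ℂ)) hr
    rw [this]; ring_nf
  have hcomp : Integrable (G ∘ (rotEquiv α)) :=
    ((rotEquiv_mp α).integrable_comp_emb (rotEquiv α).measurableEmbedding).2 hGint
  calc fourier2D f ξ₁ ξ₂ = ∫ p, G p := rfl
    _ = ∫ q, G (rotEquiv α q) :=
        ((rotEquiv_mp α).integral_comp (rotEquiv α).measurableEmbedding G).symm
    _ = ∫ q : ℝ × ℝ, f (rotEquiv α q) * Complex.exp (-2 * Real.pi * Complex.I * r * q.1) := by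
        exact integral_congr_ae (Filter.Eventually.of_forall hexp)
    _ = ∫ t : ℝ, ∫ z : ℝ,
          f (rotEquiv α (t, z)) * Complex.exp (-2 * Real.pi * Complex.I * r * t) := by
        have hint : Integrable (fun q : ℝ × ℝ =>
            f (rotEquiv α q) * Complex.exp (-2 * Real.pi * Complex.I * r * q.1))
            (volume : Measure (ℝ × ℝ)) := by
          have := hcomp
          rwa [show (G ∘ (rotEquiv α)) = fun q : ℝ × ℝ =>
            f (rotEquiv α q) * Complex.exp (-2 * Real.pi * Complex.I * r * q.1)
            from funext hexp] at this
        rw [Measure.volume_eq_prod] at hint ⊢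
        exact MeasureTheory.integral_prod _ hint
    _ = ∫ t : ℝ, radonC f α t * Complex.exp (-2 * Real.pi * Complex.I * r * t) := by
        congr 1
        funext t
        rw [radonC, ← MeasureTheory.integral_mul_const]
        congr 1
        funext z
        rw [rotEquiv_apply]

/-- Injectivity of the Radon transform on nice functions: if `f` is continuous
and integrable with integrable 2D Fourier transform, and the 1D Fourier
transform of every projection `Rf(α,·)`, `α ∈ [0,π)`, vanishes identically,
then `f ≡ 0`. -/
theorem radon_injective (f : ℝ × ℝ → ℂ)
    (hf : Integrable f) (hcont : Continuous f)
    (hF2 : Integrable (fun ξ : ℝ × ℝ => fourier2D f ξ.1 ξ.2))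
    (h0 : ∀ α ∈ Set.Ico (0 : ℝ) Real.pi, ∀ r : ℝ,
      (∫ t : ℝ, radonC f α t * Complex.exp (-2 * Real.pi * Complex.I * r * t)) = 0) :
    ∀ p : ℝ × ℝ, f p = 0 := by
  have hzero : ∀ ξ₁ ξ₂ : ℝ, fourier2D f ξ₁ ξ₂ = 0 := by
    intro ξ₁ ξ₂
    obtain ⟨α, r, hα, h1, h2⟩ := polar_cover ξ₁ ξ₂
    rw [h1, h2, fourier_slice f hf α r]
    exact h0 α hα r
  set g : ℂ → ℂ := fun z => f (z.re, z.im) with hg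
  have hΦ := Complex.volume_preserving_equiv_real_prod
  have hΦe := Complex.measurableEquivRealProd.measurableEmbedding
  have hg_int : Integrable g := by
    have : g = f ∘ Complex.measurableEquivRealProd := rfl
    rw [this]
    exact (hΦ.integrable_comp_emb hΦe).2 hf
  have hg_cont : Continuous g := hcont.comp (Complex.continuous_re.prodMk Complex.continuous_im)
  have hFg : ∀ ξ : ℂ, 𝓕 g ξ = fourier2D f ξ.re ξ.im := by
    intro ξ
    rw [Real.fourier_eq', fourier2D,
      ← hΦ.integral_comp hΦe (fun p : ℝ × ℝ =>
        f p * Complex.exp (-2 * Real.pi * Complex.I * (p.1 * ξ.re + p.2 * ξ.im)))]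
    congr 1
    funext v
    have hinner : ⟪v, ξ⟫ = v.re * ξ.re + v.im * ξ.im := by
      rw [Complex.inner]
      simp [Complex.mul_re]; ring
    simp only [Complex.measurableEquivRealProd_apply, hinner, smul_eq_mul, hg]
    rw [mul_comm]
    congr 1
    push_cast
    ring
  have hFg0 : 𝓕 g = 0 := by
    funext ξ; rw [hFg ξ, hzero]; rfl
  have hFg_int : Integrable (𝓕 g) := by
    rw [hFg0]; exact integrable_zero _ _ _
  have hinv := hg_cont.fourierInv_fourier_eq hg_int hFg_int
  have hgz : ∀ z : ℂ, g z = 0 := by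
    intro z
    rw [← hinv, hFg0]
    simp [Real.fourierInv_eq]
  intro p
  have := hgz ⟨p.1, p.2⟩
  simpa [hg] using this
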